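/- arXiv:0706.1192 — 7 statements merged into one kernel-verified Lean document; each statement's English description precedes it below -/
import Mathlib

section
/- Let X ⊆ ℝ^k and let F : ℝ^k → ℝ^(n+1) be given by F(x) = Cx where the rows of C are c¹,…,c^(n+1). If c^(n+1) = Σ_{i=1}^{n} α_i c^i with all α_i ≥ 0, then the set of efficient points of X with respect to all n+1 objectives equals the set of efficient points of X with respect to the first n objectives. Here x⁰ ∈ X is efficient with respect to objectives f_1,…,f_m (f_i(x) = c^i · x) if there is no x ∈ X with f_i(x) ≥ f_i(x⁰) for all i and f_j(x) > f_j(x⁰) for some j. -/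
open Matrix Finset

/-- `x0` is a Pareto-efficient point of `X` with respect to the objectives `f i`:
`x0 ∈ X` and no `x ∈ X` weakly dominates `x0` with a strict improvement in some objective. -/
def Efficient {k m : ℕ} (X : Set (Fin k → ℝ)) (f : Fin m → (Fin k → ℝ) → ℝ)
    (x0 : Fin k → ℝ) : Prop :=
  x0 ∈ X ∧ ¬ ∃ x ∈ X, (∀ i, f i x0 ≤ f i x) ∧ ∃ j, f j x0 < f j x

/-- Gal–Leberling: if the last objective vector is a nonnegative combination of the
first `n` objective vectors, the efficient set is unchanged after dropping it. -/
theorem stmt0 {k n : ℕ} (X : Set (Fin k → ℝ)) (c : Fin (n + 1) → (Fin k → ℝ))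
    (α : Fin n → ℝ) (hα : ∀ i, 0 ≤ α i)
    (hc : c (Fin.last n) = ∑ i : Fin n, α i • c i.castSucc) :
    {x | Efficient X (fun i y => c i ⬝ᵥ y) x} =
      {x | Efficient X (fun (i : Fin n) y => c i.castSucc ⬝ᵥ y) x} := by
  have hlast : ∀ y, c (Fin.last n) ⬝ᵥ y = ∑ i : Fin n, α i * (c i.castSucc ⬝ᵥ y) := by
    intro y
    simp only [hc, dotProduct, Finset.sum_apply, Pi.smul_apply, smul_eq_mul,
      Finset.sum_mul, Finset.mul_sum, mul_assoc]
    exact Finset.sum_comm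
  ext x0
  simp only [Set.mem_setOf_eq, Efficient]
  constructor
  · rintro ⟨hmem, hno⟩
    refine ⟨hmem, fun ⟨x, hx, hle, j, hj⟩ => ?_⟩
    refine hno ⟨x, hx, fun i => ?_, j.castSucc, hj⟩
    refine Fin.lastCases ?_ (fun i => hle i) i
    rw [hlast, hlast]
    exact Finset.sum_le_sum fun i _ =>
      mul_le_mul_of_nonneg_left (hle i) (hα i)
  · rintro ⟨hmem, hno⟩
    refine ⟨hmem, fun ⟨x, hx, hle, j, hj⟩ => ?_⟩
    have hlen : ∀ i : Fin n, c i.castSucc ⬝ᵥ x0 ≤ c i.castSucc ⬝ᵥ x :=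
      fun i => hle i.castSucc
    refine hno ⟨x, hx, hlen, ?_⟩
    refine Fin.lastCases ?_ (fun j hj => ⟨j, hj⟩) j hj
    intro hj
    rw [hlast, hlast] at hj
    by_contra hnone
    push_neg at hnone
    exact absurd (Finset.sum_le_sum fun i _ =>
      mul_le_mul_of_nonneg_left (hnone i) (hα i)) (not_le.mpr hj)
end

section
/- Let X ⊆ ℝ^k be convex with nonempty interior, and C ∈ ℝ^{(n+1)×k}. If the set U = {x ∈ ℝ^k : Cx ≥ 0} is nonempty, then there exists a point of X that is not efficient for max{Cx : x ∈ X}; that is, X_E^{n+1} ≠ X. -/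
/-!
A direction `d ∈ U` weakly improves every linear objective and strictly improves one, and from an
interior point of `X` a small enough step along `d` stays in `X`. Hence no interior point is
efficient.
-/

open Matrix Filter Topology

theorem exists_pos_add_smul_mem_of_mem_interior {E : Type*} [AddCommGroup E] [Module ℝ E]
    [TopologicalSpace E] [ContinuousSMul ℝ E] [ContinuousAdd E] {X : Set E} {x₀ : E}
    (hx₀ : x₀ ∈ interior X) (d : E) : ∃ t : ℝ, 0 < t ∧ x₀ + t • d ∈ X := by
  have hcont : Tendsto (fun t : ℝ => x₀ + t • d) (𝓝[>] 0) (𝓝 x₀) := by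
    have : Continuous (fun t : ℝ => x₀ + t • d) := by fun_prop
    simpa using (this.tendsto 0).mono_left nhdsWithin_le_nhds
  obtain ⟨t, ht, htX⟩ :=
    ((hcont.eventually (mem_interior_iff_mem_nhds.mp hx₀)).and self_mem_nhdsWithin).exists
  exact ⟨t, htX, ht⟩

theorem not_efficient_of_mem_interior {k m : ℕ} {X : Set (Fin k → ℝ)}
    {C : Matrix (Fin m) (Fin k) ℝ} {x₀ d : Fin k → ℝ} (hx₀ : x₀ ∈ interior X)
    (hd : ∀ i, 0 ≤ (C *ᵥ d) i) {j : Fin m} (hj : 0 < (C *ᵥ d) j) :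
    ¬ Efficient X (fun i y => C i ⬝ᵥ y) x₀ := by
  obtain ⟨t, ht, hX⟩ := exists_pos_add_smul_mem_of_mem_interior hx₀ d
  have hgain (i : Fin m) : C i ⬝ᵥ (x₀ + t • d) = C i ⬝ᵥ x₀ + t * (C *ᵥ d) i := by
    rw [dotProduct_add, dotProduct_smul, smul_eq_mul, mulVec]
  refine fun hEff => hEff.2 ⟨x₀ + t • d, hX, fun i => ?_, j, ?_⟩
  · exact (hgain i).ge.trans' (le_add_of_nonneg_right (mul_nonneg ht.le (hd i)))
  · exact (hgain j).ge.trans_lt' (lt_add_of_pos_right _ (mul_pos ht hj))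

theorem stmt2_general {k n : ℕ} (X : Set (Fin k → ℝ))
    (hint : (interior X).Nonempty) (C : Matrix (Fin (n + 1)) (Fin k) ℝ)
    (hU : {d : Fin k → ℝ | (∀ i, 0 ≤ C.mulVec d i) ∧ ∃ j, 0 < C.mulVec d j}.Nonempty) :
    ∃ x ∈ X, ¬ Efficient X (fun i y => C i ⬝ᵥ y) x := by
  obtain ⟨x₀, hx₀⟩ := hint
  obtain ⟨d, hd, j, hj⟩ := hU
  exact ⟨x₀, interior_subset hx₀, not_efficient_of_mem_interior hx₀ hd hj⟩

/-- If `X` is convex with nonempty interior and `U ≠ ∅`, then some point of `X` is not efficient. -/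
theorem stmt2 {k n : ℕ} (X : Set (Fin k → ℝ)) (hX : Convex ℝ X)
    (hint : (interior X).Nonempty) (C : Matrix (Fin (n + 1)) (Fin k) ℝ)
    (hU : {d : Fin k → ℝ | (∀ i, 0 ≤ C.mulVec d i) ∧ ∃ j, 0 < C.mulVec d j}.Nonempty) :
    ∃ x ∈ X, ¬ Efficient X (fun i y => C i ⬝ᵥ y) x :=
  stmt2_general X hint C hU
end

section
/- Let X ⊆ ℝ^k, x⁰ ∈ X, and f_1,…,f_n : ℝ^k → ℝ. Consider the problem: maximize Σ_{i=1}^{n} ε_i over S = {(x,ε) ∈ ℝ^{k+n} : x ∈ X, f_i(x) − ε_i = f_i(x⁰) and ε_i ≥ 0 for i = 1,…,n}. Then x⁰ is efficient for the multiobjective problem max{(f_1(x),…,f_n(x)) : x ∈ X} if and only if the supremum of Σ ε_i over S equals 0. -/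
open Matrix Finset

/-- Benson's test: `x0` is efficient iff the supremum of `Σ εᵢ` over
pairs `(x, ε)` with `x ∈ X`, `f i x - ε i = f i x0`, `ε ≥ 0` equals `0` (in `EReal`). -/
theorem stmt4 {k n : ℕ} (X : Set (Fin k → ℝ)) (f : Fin n → (Fin k → ℝ) → ℝ)
    (x0 : Fin k → ℝ) (hx0 : x0 ∈ X) :
    Efficient X f x0 ↔
      sSup {s : EReal | ∃ x ∈ X, ∃ ε : Fin n → ℝ,
        (∀ i, f i x - ε i = f i x0) ∧ (∀ i, 0 ≤ ε i) ∧
        s = ((∑ i, ε i : ℝ) : EReal)} = 0 := by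
  have hmem0 : (0 : EReal) ∈ {s : EReal | ∃ x ∈ X, ∃ ε : Fin n → ℝ,
      (∀ i, f i x - ε i = f i x0) ∧ (∀ i, 0 ≤ ε i) ∧
      s = ((∑ i, ε i : ℝ) : EReal)} := by
    refine ⟨x0, hx0, 0, fun i => by simp, fun i => le_refl _, by simp⟩
  constructor
  · rintro ⟨-, heff⟩
    apply le_antisymm
    · apply sSup_le
      rintro s ⟨x, hx, ε, heq, hnn, rfl⟩
      by_contra h
      push_neg at h
      have hsum : (0 : ℝ) < ∑ i, ε i := by exact_mod_cast h
      have hsum' : ∑ _i : Fin n, (0:ℝ) < ∑ i, ε i := by simpa using hsum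
      obtain ⟨j, -, hj⟩ := Finset.exists_lt_of_sum_lt hsum'
      exact heff ⟨x, hx, fun i => by linarith [heq i, hnn i], j, by linarith [heq j]⟩
    · exact le_sSup hmem0
  · intro hsup
    refine ⟨hx0, ?_⟩
    rintro ⟨x, hx, hle, j, hj⟩
    set ε : Fin n → ℝ := fun i => f i x - f i x0 with hε
    have hmem : ((∑ i, ε i : ℝ) : EReal) ∈ {s : EReal | ∃ x ∈ X, ∃ ε : Fin n → ℝ,
        (∀ i, f i x - ε i = f i x0) ∧ (∀ i, 0 ≤ ε i) ∧
        s = ((∑ i, ε i : ℝ) : EReal)} :=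
      ⟨x, hx, ε, fun i => by simp [hε], fun i => by simpa [hε] using hle i, rfl⟩
    have hpos : (0 : ℝ) < ∑ i, ε i :=
      Finset.sum_pos' (fun i _ => by simpa [hε] using hle i)
        ⟨j, Finset.mem_univ j, by simpa [hε] using hj⟩
    have := le_sSup hmem
    rw [hsup] at this
    exact absurd this (by exact_mod_cast not_le.mpr hpos)
end

section
/- Let X ⊆ ℝ^k be convex and let f_1,…,f_n : ℝ^k → ℝ be linear. If points x¹,…,x^q ∈ X are all non-efficient for max{(f_1(x),…,f_n(x)) : x ∈ X}, then every convex combination Σ_{j=1}^{q} α_j x^j (α_j ≥ 0, Σ α_j = 1) that lies in X is also non-efficient. -/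
open Matrix Finset

/-- The set of non-efficient points (linear objectives, convex `X`) is closed under
convex combinations staying in `X`. -/
theorem stmt5 {k n q : ℕ} (X : Set (Fin k → ℝ)) (hX : Convex ℝ X)
    (c : Fin n → (Fin k → ℝ)) (x : Fin q → (Fin k → ℝ))
    (hxX : ∀ j, x j ∈ X)
    (hne : ∀ j, ¬ Efficient X (fun i y => c i ⬝ᵥ y) (x j))
    (α : Fin q → ℝ) (hα : ∀ j, 0 ≤ α j) (hs : ∑ j, α j = 1)
    (hy : (∑ j, α j • x j) ∈ X) :
    ¬ Efficient X (fun i y => c i ⬝ᵥ y) (∑ j, α j • x j) := by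
  have hdot : ∀ (v : Fin k → ℝ) (w : Fin q → Fin k → ℝ),
      v ⬝ᵥ (∑ j, α j • w j) = ∑ j, α j * (v ⬝ᵥ w j) := by
    intro v w
    simp only [dotProduct, Finset.sum_apply, Pi.smul_apply, smul_eq_mul, Finset.mul_sum]
    rw [Finset.sum_comm]
    exact Finset.sum_congr rfl fun j _ => Finset.sum_congr rfl fun i _ => by ring
  -- extract dominators
  have hz : ∀ j, ∃ z ∈ X, (∀ i, c i ⬝ᵥ x j ≤ c i ⬝ᵥ z) ∧ ∃ i, c i ⬝ᵥ x j < c i ⬝ᵥ z := by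
    intro j
    have h := hne j
    unfold Efficient at h
    push_neg at h
    exact h (hxX j)
  choose z hzX hle hst using hz
  intro ⟨_, hdom⟩
  apply hdom
  refine ⟨∑ j, α j • z j, hX.sum_mem (fun j _ => hα j) hs (fun j _ => hzX j), ?_, ?_⟩
  · intro i
    beta_reduce
    rw [hdot, hdot]
    exact Finset.sum_le_sum fun j _ => mul_le_mul_of_nonneg_left (hle j i) (hα j)
  · -- some α j0 > 0
    have h1 : (0:ℝ) < 1 := one_pos
    rw [← hs] at h1
    have h2 : ∑ j : Fin q, (0:ℝ) < ∑ j, α j := by simpa using h1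
    obtain ⟨j0, _, hj0⟩ := Finset.exists_lt_of_sum_lt h2
    have hj0' : 0 < α j0 := hj0
    obtain ⟨i, hi⟩ := hst j0
    refine ⟨i, ?_⟩
    beta_reduce
    rw [hdot, hdot]
    apply Finset.sum_lt_sum (fun j _ => mul_le_mul_of_nonneg_left (hle j i) (hα j))
    exact ⟨j0, Finset.mem_univ _, mul_lt_mul_of_pos_left hi hj0'⟩
end

section
/- Let X ⊆ ℝ^k, let F^n(x) = (f_1(x),…,f_n(x)) and F^{n+1}(x) = (f_1(x),…,f_{n+1}(x)) with each f_i linear. Let X_E^n and X_E^{n+1} be the efficient sets for the n-objective and (n+1)-objective problems respectively. If the map F^n is injective on X_E^n, then X_E^n ⊆ X_E^{n+1}. -/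
open Matrix Finset

/-- If the map given by the first `n` (linear) objectives is injective on the
`n`-objective efficient set, then that set is contained in the `(n+1)`-objective
efficient set. -/
theorem stmt6 {k n : ℕ} (X : Set (Fin k → ℝ)) (c : Fin (n + 1) → (Fin k → ℝ))
    (hinj : Set.InjOn (fun x => fun i : Fin n => c i.castSucc ⬝ᵥ x)
      {x | Efficient X (fun (i : Fin n) y => c i.castSucc ⬝ᵥ y) x}) :
    {x | Efficient X (fun (i : Fin n) y => c i.castSucc ⬝ᵥ y) x} ⊆
      {x | Efficient X (fun i y => c i ⬝ᵥ y) x} := by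
  intro x0 hx0
  obtain ⟨hx0X, hx0eff⟩ := hx0
  refine ⟨hx0X, ?_⟩
  rintro ⟨x, hxX, hle, j, hj⟩
  -- x weakly dominates x0 in the first n objectives
  have hleN : ∀ i : Fin n, c i.castSucc ⬝ᵥ x0 ≤ c i.castSucc ⬝ᵥ x :=
    fun i => hle i.castSucc
  -- no strict improvement among the first n objectives
  have hnostrict : ∀ i : Fin n, c i.castSucc ⬝ᵥ x = c i.castSucc ⬝ᵥ x0 := by
    intro i
    by_contra h
    exact hx0eff ⟨x, hxX, hleN, i, lt_of_le_of_ne (hleN i) (Ne.symm h)⟩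
  -- x is itself efficient for the first n objectives
  have hxeff : Efficient X (fun (i : Fin n) y => c i.castSucc ⬝ᵥ y) x := by
    refine ⟨hxX, ?_⟩
    rintro ⟨y, hyX, hyle, i, hyi⟩
    exact hx0eff ⟨y, hyX, fun i' => (hleN i').trans (hyle i'),
      i, lt_of_le_of_lt (hleN i) hyi⟩
  -- injectivity forces x = x0
  have hx0eff' : Efficient X (fun (i : Fin n) y => c i.castSucc ⬝ᵥ y) x0 := ⟨hx0X, hx0eff⟩
  have hxy : x = x0 := hinj hxeff hx0eff' (funext fun i => hnostrict i)
  -- but then the strict inequality at j is absurd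
  rw [hxy] at hj
  exact lt_irrefl _ hj
end

section
/- Let X ⊆ ℝ^k be a nonempty compact convex polyhedron, and let f_1,…,f_{n+1} be linear objectives with efficient sets X_E^n (for the first n objectives) and X_E^{n+1} (for all n+1). Let X_{n+1} = argmax{f_{n+1}(x) : x ∈ X}. If (i) for every x ∈ X \ X_E^n there exists x' ∈ X with F^{n+1}(x') ≥ F^{n+1}(x), (ii) X_E^n ∩ X_{n+1} ≠ ∅, and (iii) X_E^n ⊆ X_E^{n+1}, then X_E^n = X_E^{n+1} (i.e., f_{n+1} is nonessential). -/
open Matrix Finset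

/-- Sufficiency direction of Malinowska's theorem: under conditions (i)-(iii) the
objective `f_{n+1}` is nonessential, i.e. the efficient sets coincide. -/
theorem stmt11 {k n : ℕ} (X : Set (Fin k → ℝ)) (hne : X.Nonempty)
    (hcomp : IsCompact X) (hconv : Convex ℝ X)
    (c : Fin (n + 1) → (Fin k → ℝ))
    (h1 : ∀ x ∈ X \ {y | Efficient X (fun (i : Fin n) z => c i.castSucc ⬝ᵥ z) y},
      ∃ x' ∈ X, (∀ i : Fin (n + 1), c i ⬝ᵥ x ≤ c i ⬝ᵥ x') ∧ ∃ j, c j ⬝ᵥ x < c j ⬝ᵥ x')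
    (h2 : ({y | Efficient X (fun (i : Fin n) z => c i.castSucc ⬝ᵥ z) y} ∩
      {y | y ∈ X ∧ ∀ x ∈ X, c (Fin.last n) ⬝ᵥ x ≤ c (Fin.last n) ⬝ᵥ y}).Nonempty)
    (h3 : {y | Efficient X (fun (i : Fin n) z => c i.castSucc ⬝ᵥ z) y} ⊆
      {y | Efficient X (fun i z => c i ⬝ᵥ z) y}) :
    {y | Efficient X (fun (i : Fin n) z => c i.castSucc ⬝ᵥ z) y} =
      {y | Efficient X (fun i z => c i ⬝ᵥ z) y} := by
  apply Set.Subset.antisymm h3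
  intro y hy
  by_contra hne'
  obtain ⟨x', hx', hdom, hstrict⟩ := h1 y ⟨hy.1, hne'⟩
  exact hy.2 ⟨x', hx', hdom, hstrict⟩
end

section
/- Let X ⊆ ℝ^k and let f_1,…,f_{n+1} be objectives with X_E^{n+1} the efficient set for all n+1 objectives and X_E^n the efficient set for the first n. If X_E^n = X_E^{n+1}, then X_E^n ∩ argmax{f_{n+1}(x) : x ∈ X} ≠ ∅, provided argmax{f_{n+1}(x) : x ∈ X} is nonempty and X_E^{n+1} contains a maximizer of f_{n+1} over X whenever X is a nonempty compact polyhedron. Concretely: assume X is a nonempty compact convex polyhedron and the f_i are linear; if f_{n+1} is nonessential (X_E^n = X_E^{n+1}), then some maximizer of f_{n+1} over X lies in X_E^n. -/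
open Matrix Finset

/-- Necessity of condition (ii): on a nonempty compact convex (polyhedral) feasible
set with linear objectives, if `f_{n+1}` is nonessential then some maximizer of
`f_{n+1}` over `X` is efficient for the first `n` objectives. -/
theorem stmt12 {k n : ℕ} (X : Set (Fin k → ℝ)) (hne : X.Nonempty)
    (hcomp : IsCompact X) (hconv : Convex ℝ X)
    (c : Fin (n + 1) → (Fin k → ℝ))
    (hness : {y | Efficient X (fun (i : Fin n) z => c i.castSucc ⬝ᵥ z) y} =
      {y | Efficient X (fun i z => c i ⬝ᵥ z) y}) :
    ∃ y ∈ X, (∀ x ∈ X, c (Fin.last n) ⬝ᵥ x ≤ c (Fin.last n) ⬝ᵥ y) ∧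
      Efficient X (fun (i : Fin n) z => c i.castSucc ⬝ᵥ z) y := by
  have hf : ∀ j : Fin (n + 1), Continuous fun x : Fin k → ℝ => c j ⬝ᵥ x := by
    intro j
    simp only [dotProduct]
    exact continuous_finset_sum _ fun i _ => continuous_const.mul (continuous_apply i)
  obtain ⟨y0, hy0X, hy0⟩ := hcomp.exists_isMaxOn hne (hf (Fin.last n)).continuousOn
  set M : Set (Fin k → ℝ) :=
    {x | x ∈ X ∧ c (Fin.last n) ⬝ᵥ x = c (Fin.last n) ⬝ᵥ y0} with hM
  have hMne : M.Nonempty := ⟨y0, hy0X, rfl⟩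
  have hMsub : M ⊆ X := fun x hx => hx.1
  have hMcomp : IsCompact M := by
    have : M = X ∩ {x | c (Fin.last n) ⬝ᵥ x = c (Fin.last n) ⬝ᵥ y0} := rfl
    rw [this]
    exact hcomp.inter_right (isClosed_eq (hf _) continuous_const)
  obtain ⟨y, hyM, hy⟩ := hMcomp.exists_isMaxOn hMne
    (Continuous.continuousOn (continuous_finset_sum Finset.univ
      fun j _ => hf j) : ContinuousOn (fun x => ∑ j : Fin (n + 1), c j ⬝ᵥ x) M)
  have hymax : ∀ x ∈ X, c (Fin.last n) ⬝ᵥ x ≤ c (Fin.last n) ⬝ᵥ y := by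
    intro x hx
    rw [hyM.2]
    exact hy0 hx
  have heff : Efficient X (fun i z => c i ⬝ᵥ z) y := by
    refine ⟨hyM.1, ?_⟩
    rintro ⟨x, hxX, hle, j, hlt⟩
    have hxM : x ∈ M := ⟨hxX, le_antisymm (hy0 hxX) (hyM.2 ▸ hle (Fin.last n))⟩
    have hsum : (∑ i : Fin (n + 1), c i ⬝ᵥ y) < ∑ i : Fin (n + 1), c i ⬝ᵥ x :=
      Finset.sum_lt_sum (fun i _ => hle i) ⟨j, Finset.mem_univ j, hlt⟩
    exact absurd (hy hxM) (not_le.mpr hsum)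
  have : y ∈ {y | Efficient X (fun (i : Fin n) z => c i.castSucc ⬝ᵥ z) y} := by
    rw [hness]; exact heff
  exact ⟨y, hyM.1, hymax, this⟩
end
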